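/- arXiv:1909.13386 — 2 statements merged into one kernel-verified Lean document; each statement's English description precedes it below -/
import Mathlib

section
/- Let p ∈ [1, ∞), N real with N ≤ d/p, and suppose u : ℤ^d → ℂ has the form u(g) = ∑_{r=1}^ℓ c_r e^{i k_r · g} for distinct quasimomenta k₁, …, k_ℓ ∈ [−π,π)^d and constants c_r ∈ ℂ. If ∑_{g ∈ ℤ^d} |u(g)|^p ⟨g⟩^{−pN} < ∞, then all c_r = 0 and hence u ≡ 0. -/
open Complex

/-- The Japanese bracket `⟨g⟩ = (1 + |g|²)^(1/2)` for `g ∈ ℤ^d`. -/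
noncomputable def jbracket {d : ℕ} (g : Fin d → ℤ) : ℝ :=
  Real.sqrt (1 + ∑ i, ((g i : ℝ)) ^ 2)

/-!
Expanding `|u|²` and summing over the cube `[-n, n]^d` turns each cross term
`c_r c̄_s e^{i (k_r - k_s)·g}` into a product of one-dimensional Dirichlet sums. These are
bounded when `k_r - k_s ∉ 2πℤ^d`, so the mean of `|u|²` over the cube tends to `∑ |c_r|²`.
Since `|u| ≤ ∑ |c_r|`, a positive proportion of the cube carries `|u|` bounded below, so
`∑_{[-n,n]^d} |u|^p ≳ n^d`. On `[-n,n]^d \ [-m,m]^d` the weight is `⟨g⟩^{-pN} ≥ ⟨g⟩^{-d} ≳ n^{-d}`,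
so these shells carry a weighted mass bounded below uniformly in `n`, contradicting summability.
-/

open Finset Filter Topology Function ComplexConjugate

lemma Int.card_Icc_neg_self (n : ℕ) : #(Icc (-(n : ℤ)) n) = 2 * n + 1 := by
  rw [Int.card_Icc]; omega

lemma norm_sum_Icc_zpow_mul_norm_sub_one_le {z : ℂ} (hz : ‖z‖ = 1) (n : ℕ) :
    ‖∑ m ∈ Icc (-(n : ℤ)) n, z ^ m‖ * ‖z - 1‖ ≤ 2 := by
  have hz0 : z ≠ 0 := by rintro rfl; simp at hz
  have hshift :
      ∑ m ∈ Icc (-(n : ℤ)) n, z ^ m = z ^ (-(n : ℤ)) * ∑ j ∈ range (2 * n + 1), z ^ j := by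
    rw [Int.Icc_eq_finset_map, sum_map, mul_sum, show (n + 1 - -(n : ℤ)).toNat = 2 * n + 1 by omega]
    refine sum_congr rfl fun j _ => ?_
    simp [zpow_add₀ hz0]
  rw [hshift, norm_mul, norm_zpow, hz, one_zpow, one_mul, ← norm_mul, geom_sum_mul]
  calc ‖z ^ (2 * n + 1) - 1‖ ≤ ‖z ^ (2 * n + 1)‖ + ‖(1 : ℂ)‖ := norm_sub_le _ _
    _ = 2 := by rw [norm_pow, hz]; norm_num

lemma tendsto_sum_Icc_zpow_div {z : ℂ} (hz : ‖z‖ = 1) :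
    Tendsto (fun n : ℕ => (∑ m ∈ Icc (-(n : ℤ)) n, z ^ m) / (2 * n + 1)) atTop
      (𝓝 (if z = 1 then 1 else 0)) := by
  split_ifs with h
  · subst h
    refine tendsto_const_nhds.congr fun n => ?_
    rw [eq_div_iff (by norm_cast), one_mul]
    simp only [one_zpow, sum_const, Int.card_Icc_neg_self, nsmul_eq_mul, mul_one]
    push_cast; ring
  · have hz1 : 0 < ‖z - 1‖ := norm_pos_iff.2 (sub_ne_zero.2 h)
    refine squeeze_zero_norm (fun n => ?_) ((tendsto_const_nhds (x := 2 / ‖z - 1‖)).div_atTop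
      (tendsto_atTop_add_const_right _ 1 (tendsto_natCast_atTop_atTop.const_mul_atTop two_pos)))
    rw [norm_div, show ‖(2 * n + 1 : ℂ)‖ = 2 * n + 1 by norm_cast,
      div_le_div_iff_of_pos_right (by positivity), le_div_iff₀ hz1]
    exact norm_sum_Icc_zpow_mul_norm_sub_one_le hz n

noncomputable def cube (d n : ℕ) : Finset (Fin d → ℤ) :=
  Fintype.piFinset fun _ => Icc (-(n : ℤ)) n

lemma card_cube (d n : ℕ) : #(cube d n) = (2 * n + 1) ^ d := by
  rw [cube, Fintype.card_piFinset, Int.card_Icc_neg_self, prod_const, card_univ, Fintype.card_fin]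

lemma card_cube_pos (d n : ℕ) : 0 < #(cube d n) := by
  rw [card_cube]; positivity

lemma cube_mono (d : ℕ) : Monotone (cube d) := fun m n hmn =>
  Fintype.piFinset_subset _ _ fun _ => Icc_subset_Icc (by omega) (by omega)

lemma tendsto_cube_atTop (d : ℕ) : Tendsto (cube d) atTop atTop := by
  refine tendsto_atTop_finset_of_monotone (cube_mono d) fun g => ⟨∑ i, (g i).natAbs, ?_⟩
  simp only [cube, Fintype.mem_piFinset, mem_Icc]
  intro i
  have : (g i).natAbs ≤ ∑ j, (g j).natAbs :=
    single_le_sum (f := fun j => (g j).natAbs) (fun j _ => Nat.zero_le _) (mem_univ i)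
  omega

lemma one_le_jbracket {d : ℕ} (g : Fin d → ℤ) : 1 ≤ jbracket g :=
  Real.one_le_sqrt.2 (le_add_of_nonneg_right (sum_nonneg fun _ _ => sq_nonneg _))

lemma jbracket_pos {d : ℕ} (g : Fin d → ℤ) : 0 < jbracket g :=
  zero_lt_one.trans_le (one_le_jbracket g)

lemma jbracket_pow_le_of_mem_cube {d n : ℕ} {g : Fin d → ℤ} (hg : g ∈ cube d n) :
    jbracket g ^ d ≤ (d + 1) ^ d * #(cube d n) := by
  have hsq : ∑ i, ((g i : ℝ)) ^ 2 ≤ d * (n : ℝ) ^ 2 := by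
    have hi : ∀ i, ((g i : ℝ)) ^ 2 ≤ (n : ℝ) ^ 2 := fun i => by
      obtain ⟨h₁, h₂⟩ := mem_Icc.1 (Fintype.mem_piFinset.1 hg i)
      exact sq_le_sq' (by exact_mod_cast h₁) (by exact_mod_cast h₂)
    simpa using sum_le_sum fun i (_ : i ∈ univ) => hi i
  have : jbracket g ≤ (d + 1) * (2 * n + 1) := by
    refine Real.sqrt_le_iff.2 ⟨by positivity, ?_⟩
    have hd : (0 : ℝ) ≤ d := d.cast_nonneg
    have hn : (0 : ℝ) ≤ n := n.cast_nonneg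
    nlinarith [mul_nonneg hd hn, mul_nonneg (mul_nonneg hd hn) hn, mul_nonneg hd hd]
  rw [card_cube, Nat.cast_pow, ← mul_pow]
  push_cast
  exact pow_le_pow_left₀ (jbracket_pos g).le this d

noncomputable def planeWave {d : ℕ} (θ : Fin d → ℝ) (g : Fin d → ℤ) : ℂ :=
  exp (I * ↑(∑ i, θ i * (g i : ℝ)))

section planeWave

variable {d : ℕ} (θ η : Fin d → ℝ) (g : Fin d → ℤ)

lemma norm_planeWave : ‖planeWave θ g‖ = 1 := by
  rw [planeWave, mul_comm, norm_exp_ofReal_mul_I]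

lemma planeWave_eq_prod : planeWave θ g = ∏ i, exp (θ i * I) ^ g i := by
  simp only [planeWave, ofReal_sum, mul_sum, exp_sum, ← exp_int_mul]
  refine prod_congr rfl fun i _ => congrArg exp ?_
  push_cast; ring

lemma planeWave_mul_conj : planeWave θ g * conj (planeWave η g) = planeWave (θ - η) g := by
  simp only [planeWave, ← exp_conj, ← exp_add, map_mul, conj_I, conj_ofReal, Pi.sub_apply,
    sub_mul, sum_sub_distrib, ofReal_sub]
  ring_nf

lemma norm_sum_mul_planeWave_le {ι : Type*} [Fintype ι] (c : ι → ℂ) (k : ι → Fin d → ℝ) :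
    ‖∑ r, c r * planeWave (k r) g‖ ≤ ∑ r, ‖c r‖ :=
  (norm_sum_le _ _).trans_eq (by simp only [norm_mul, norm_planeWave, mul_one])

lemma tendsto_sum_cube_planeWave_div :
    Tendsto (fun n => (∑ g ∈ cube d n, planeWave θ g) / #(cube d n)) atTop
      (𝓝 (if ∀ i, exp (θ i * I) = 1 then 1 else 0)) := by
  have hcube : ∀ n, (∑ g ∈ cube d n, planeWave θ g) / #(cube d n)
      = ∏ i, (∑ m ∈ Icc (-(n : ℤ)) n, exp (θ i * I) ^ m) / (2 * n + 1) := fun n => by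
    rw [prod_div_distrib, prod_univ_sum, prod_const, card_univ, Fintype.card_fin, card_cube]
    simp only [planeWave_eq_prod, cube]
    push_cast; rfl
  simp only [hcube]
  convert tendsto_finsetProd _ fun i _ => tendsto_sum_Icc_zpow_div (norm_exp_ofReal_mul_I (θ i))
  rw [Fintype.prod_boole]
  congr

end planeWave

section Parseval

variable {d ℓ : ℕ} {k : Fin ℓ → Fin d → ℝ} (c : Fin ℓ → ℂ)

lemma norm_sum_mul_planeWave_sq (g : Fin d → ℤ) :
    (‖∑ r, c r * planeWave (k r) g‖ : ℂ) ^ 2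
      = ∑ r, ∑ s, c r * conj (c s) * planeWave (k r - k s) g := by
  rw [← mul_conj', map_sum, sum_mul_sum]
  refine sum_congr rfl fun r _ => sum_congr rfl fun s _ => ?_
  rw [map_mul, mul_mul_mul_comm, planeWave_mul_conj]

theorem tendsto_sum_cube_norm_sq_div (hk : Injective fun r i => exp (k r i * I)) :
    Tendsto (fun n => (∑ g ∈ cube d n, ‖∑ r, c r * planeWave (k r) g‖ ^ 2) / #(cube d n))
      atTop (𝓝 (∑ r, ‖c r‖ ^ 2)) := by
  have hdiag : ∀ r s, (∀ i, exp ((k r - k s) i * I) = 1) ↔ r = s := fun r s => by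
    simp only [Pi.sub_apply, ofReal_sub, sub_mul, exp_sub, div_eq_one_iff_eq (exp_ne_zero _)]
    exact ⟨fun h => hk (funext h), fun h _ => h ▸ rfl⟩
  have hmean : ∀ n, (((∑ g ∈ cube d n, ‖∑ r, c r * planeWave (k r) g‖ ^ 2) / #(cube d n) : ℝ) : ℂ)
      = ∑ r, ∑ s, c r * conj (c s) * ((∑ g ∈ cube d n, planeWave (k r - k s) g) / #(cube d n)) :=
    fun n => by
      push_cast
      simp only [norm_sum_mul_planeWave_sq, mul_div_assoc, mul_sum, sum_div]
      rw [sum_comm]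
      exact sum_congr rfl fun r _ => sum_comm
  rw [← tendsto_ofReal_iff, funext hmean]
  convert tendsto_finsetSum univ fun r _ => tendsto_finsetSum univ fun s _ =>
    (tendsto_sum_cube_planeWave_div (k r - k s)).const_mul (c r * conj (c s))
  simp only [hdiag, mul_ite, mul_one, mul_zero, sum_ite_eq, mem_univ, ite_true, mul_conj',
    ofReal_sum, ofReal_pow]

end Parseval

lemma sq_le_sq_add_mul_div_rpow {x M t p : ℝ} (hx : 0 ≤ x) (hxM : x ≤ M) (ht : 0 < t)
    (hp : 0 ≤ p) : x ^ 2 ≤ t ^ 2 + M ^ 2 * (x / t) ^ p := by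
  rcases lt_or_ge x t with hxt | htx
  · have := mul_nonneg (sq_nonneg M) (Real.rpow_nonneg (div_nonneg hx ht.le) p)
    nlinarith [pow_le_pow_left₀ hx hxt.le 2]
  · have h1 : 1 ≤ (x / t) ^ p := Real.one_le_rpow ((one_le_div ht).2 htx) hp
    nlinarith [pow_le_pow_left₀ hx hxM 2, sq_nonneg t, sq_nonneg M]

lemma exists_pos_mul_card_le_sum_rpow {α : Type*} {f : α → ℝ} {M σ p : ℝ}
    (hf₀ : ∀ x, 0 ≤ f x) (hfM : ∀ x, f x ≤ M) (hM : 0 < M) (hσ : 0 < σ) (hp : 0 ≤ p) :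
    ∃ κ > 0, ∀ s : Finset α, σ * #s ≤ ∑ x ∈ s, f x ^ 2 → κ * #s ≤ ∑ x ∈ s, f x ^ p := by
  set t := √(σ / 2)
  have ht : 0 < t := Real.sqrt_pos.2 (half_pos hσ)
  have htσ : t ^ 2 = σ / 2 := Real.sq_sqrt (half_pos hσ).le
  refine ⟨σ / 2 * t ^ p / M ^ 2, by positivity, fun s hs => ?_⟩
  have hpt : ∀ x, f x ^ 2 ≤ t ^ 2 + M ^ 2 * f x ^ p / t ^ p := fun x => by
    simpa only [Real.div_rpow (hf₀ x) ht.le, mul_div_assoc'] using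
      sq_le_sq_add_mul_div_rpow (hf₀ x) (hfM x) ht hp
  have hsum := hs.trans (sum_le_sum fun x (_ : x ∈ s) => hpt x)
  rw [sum_add_distrib, sum_const, nsmul_eq_mul, ← sum_div, ← mul_sum, htσ] at hsum
  have hhalf : σ / 2 * #s * t ^ p ≤ M ^ 2 * ∑ x ∈ s, f x ^ p := by
    rw [← le_div_iff₀ (Real.rpow_pos_of_pos ht p)]
    linarith
  rw [div_mul_eq_mul_div, div_le_iff₀ (by positivity)]
  linarith

theorem not_summable_div_jbracket_pow {d : ℕ} (hd : 1 ≤ d) {a : (Fin d → ℤ) → ℝ}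
    (ha : ∀ g, 0 ≤ a g) {κ : ℝ} (hκ : 0 < κ)
    (h : ∀ᶠ n in atTop, κ * #(cube d n) ≤ ∑ g ∈ cube d n, a g) :
    ¬ Summable fun g => a g / jbracket g ^ d := by
  intro hs
  obtain ⟨s, hs⟩ := summable_iff_vanishing_norm.1 hs (κ / (2 * (d + 1) ^ d)) (by positivity)
  obtain ⟨m, hm⟩ := ((tendsto_cube_atTop d).eventually_ge_atTop s).exists
  set A := ∑ g ∈ cube d m, a g
  have hcard : ∀ n : ℕ, (n : ℝ) ≤ #(cube d n) := fun n => by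
    rw [card_cube]
    exact_mod_cast (Nat.le_self_pow (by omega) _).trans' (by omega)
  obtain ⟨n, hn, hnA, hmn⟩ := (h.and ((tendsto_natCast_atTop_atTop.eventually_ge_atTop
    (2 * A / κ)).and (eventually_ge_atTop m))).exists
  have hQ : 0 < (#(cube d n) : ℝ) := Nat.cast_pos.2 (card_cube_pos d n)
  have hAn : A ≤ κ / 2 * #(cube d n) := by
    rw [div_le_iff₀ hκ] at hnA
    nlinarith [hcard n]
  have hε : κ / (2 * (d + 1) ^ d) ≤ ∑ g ∈ cube d n \ cube d m, a g / jbracket g ^ d := by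
    calc κ / (2 * (d + 1) ^ d)
      _ = (κ * #(cube d n) - κ / 2 * #(cube d n)) / ((d + 1) ^ d * #(cube d n)) := by
          field_simp; ring
      _ ≤ (∑ g ∈ cube d n, a g - A) / ((d + 1) ^ d * #(cube d n)) := by gcongr
      _ = ∑ g ∈ cube d n \ cube d m, a g / ((d + 1) ^ d * #(cube d n)) := by
          rw [← sum_sdiff (cube_mono d hmn), add_sub_cancel_right, sum_div]
      _ ≤ ∑ g ∈ cube d n \ cube d m, a g / jbracket g ^ d :=
          sum_le_sum fun g hg => div_le_div_of_nonneg_left (ha g)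
            (pow_pos (jbracket_pos g) d)
            (jbracket_pow_le_of_mem_cube (mem_sdiff.1 hg).1)
  have hsmall := hs (cube d n \ cube d m) (disjoint_sdiff_self_left.mono_right hm)
  rw [Real.norm_of_nonneg (sum_nonneg fun g _ => div_nonneg (ha g)
    (pow_nonneg (jbracket_pos g).le d))] at hsmall
  linarith

lemma exists_pos_eventually_mul_card_le_sum_rpow {d ℓ : ℕ} {k : Fin ℓ → Fin d → ℝ}
    (hk : Injective fun r i => exp (k r i * I)) {c : Fin ℓ → ℂ} (hc : c ≠ 0) {p : ℝ} (hp : 0 ≤ p) :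
    ∃ κ > 0, ∀ᶠ n in atTop,
      κ * #(cube d n) ≤ ∑ g ∈ cube d n, ‖∑ r, c r * planeWave (k r) g‖ ^ p := by
  obtain ⟨r₀, hr₀⟩ := Function.ne_iff.1 hc
  have hσ : 0 < ∑ r, ‖c r‖ ^ 2 :=
    sum_pos' (fun r _ => by positivity) ⟨r₀, mem_univ _, pow_pos (norm_pos_iff.2 hr₀) 2⟩
  have hM : 0 < ∑ r, ‖c r‖ :=
    sum_pos' (fun r _ => norm_nonneg _) ⟨r₀, mem_univ _, norm_pos_iff.2 hr₀⟩
  have hL2 : ∀ᶠ n in atTop, (∑ r, ‖c r‖ ^ 2) / 2 * #(cube d n)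
      ≤ ∑ g ∈ cube d n, ‖∑ r, c r * planeWave (k r) g‖ ^ 2 :=
    ((tendsto_sum_cube_norm_sq_div c hk).eventually_const_lt (half_lt_self hσ)).mono fun n hn =>
      (le_div_iff₀ (Nat.cast_pos.2 (card_cube_pos d n))).1 hn.le
  obtain ⟨κ, hκ, hLp⟩ := exists_pos_mul_card_le_sum_rpow (fun _ => norm_nonneg _)
    (fun g => norm_sum_mul_planeWave_le g c k) hM (half_pos hσ) hp
  exact ⟨κ, hκ, hL2.mono fun n => hLp _⟩

lemma injective_exp_mul_I_of_mem_Ico {ι κ : Type*} {k : ι → κ → ℝ}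
    (hk : ∀ r i, k r i ∈ Set.Ico (-Real.pi) Real.pi) (hinj : Injective k) :
    Injective fun r i => exp (k r i * I) := fun r s h =>
  hinj <| funext fun i => Circle.exp_injOn_Ico (by linarith) (hk r i) (hk s i)
    (Subtype.ext (by simpa only [Circle.coe_exp] using congrFun h i))

lemma div_jbracket_pow_le_mul_rpow_neg {d : ℕ} {a s : ℝ} (ha : 0 ≤ a) (hs : s ≤ d)
    (g : Fin d → ℤ) : a / jbracket g ^ d ≤ a * jbracket g ^ (-s) := by
  rw [div_eq_mul_inv, ← Real.rpow_natCast, ← Real.rpow_neg (jbracket_pos g).le]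
  exact mul_le_mul_of_nonneg_left
    (Real.rpow_le_rpow_of_exponent_le (one_le_jbracket g) (neg_le_neg hs)) ha

/-- **Unique continuation at infinity, `p < ∞` case.** Let `p ∈ [1,∞)`, `N ≤ d/p`,
and let `u(g) = ∑_r c_r e^{i k_r · g}` for distinct quasimomenta
`k_1, …, k_ℓ ∈ [−π,π)^d`. If `∑_{g∈ℤ^d} |u(g)|^p ⟨g⟩^{−pN} < ∞`, then all `c_r = 0`
(hence `u ≡ 0`). -/
theorem unique_continuation_at_infinity_lp (d ℓ : ℕ) (hd : 1 ≤ d)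
    (p N : ℝ) (hp : 1 ≤ p) (hN : N ≤ (d : ℝ) / p)
    (k : Fin ℓ → Fin d → ℝ) (hk : ∀ r i, k r i ∈ Set.Ico (-Real.pi) Real.pi)
    (hdist : Function.Injective k)
    (c : Fin ℓ → ℂ)
    (u : (Fin d → ℤ) → ℂ)
    (hu : ∀ g, u g = ∑ r : Fin ℓ, c r * Complex.exp (Complex.I * (∑ i, (k r i * (g i : ℝ) : ℝ))))
    (hsum : Summable (fun g : Fin d → ℤ => ‖u g‖ ^ p * jbracket g ^ (-(p * N)))) :
    (∀ r, c r = 0) ∧ ∀ g, u g = 0 := by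
  have hp₀ : 0 < p := by linarith
  have hc : c = 0 := by
    obtain rfl : u = fun g => ∑ r, c r * planeWave (k r) g := funext hu
    by_contra hc
    obtain ⟨κ, hκ, hLp⟩ := exists_pos_eventually_mul_card_le_sum_rpow
      (injective_exp_mul_I_of_mem_Ico hk hdist) hc hp₀.le
    refine not_summable_div_jbracket_pow hd (fun _ => by positivity) hκ hLp
      (hsum.of_nonneg_of_le (fun g => div_nonneg (by positivity) (pow_nonneg (jbracket_pos g).le d))
        fun g => div_jbracket_pow_le_mul_rpow_neg (by positivity) ((le_div_iff₀' hp₀).1 hN) g)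
  exact ⟨fun r => by simp [hc], fun g => by simp [hu g, hc]⟩
end

section
/- Fix d ≥ 1, s ∈ (max(0, N + d), d) with N + d < d possible only when N < 0, and let φ ∈ C^∞(𝕋^d) be supported in a ball B(k₀, 2δ). Define φ^ε(k) := φ(ε^{−1}(k − k₀) + k₀) for 0 < ε < 1 (scaled cutoff). Then the Fourier coefficients satisfy |φ̂^ε(g)| ≤ C ε^{d−s} ⟨g⟩^{−s} for all g ∈ ℤ^d, with C independent of ε and g; consequently ∑_{g∈ℤ^d} |φ̂^ε(g)| ⟨g⟩^N ≤ C' ε^{d−s} → 0 as ε → 0⁺ whenever N − s < −d. -/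
open MeasureTheory Real

/-- The fundamental domain `(−π,π)^d` of the torus `𝕋^d = ℝ^d/(2πℤ)^d`. -/
def torusBox (d : ℕ) : Set (Fin d → ℝ) := Set.univ.pi fun _ => Set.Ioo (-π) π

/-- Fourier coefficient `ψ̂(g) = (2π)^{−d} ∫_{𝕋^d} ψ(k) e^{−i k·g} dk`. -/
noncomputable def fourierCoef {d : ℕ} (ψ : (Fin d → ℝ) → ℂ) (g : Fin d → ℤ) : ℂ :=
  (2 * π : ℂ) ^ (-(d : ℤ)) *
    ∫ k in torusBox d, ψ k * Complex.exp (-Complex.I * (∑ i, (k i * (g i : ℝ) : ℝ)))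

set_option maxHeartbeats 1000000

open FourierTransform RealInnerProductSpace

namespace SCFD

lemma sum1d {u : ℝ} (hu : 1 < 2 * u) :
    Summable (fun m : ℤ => ((1:ℝ) + (m:ℝ)^2) ^ (-u)) := by
  have hu0 : 0 < u := by linarith
  have hsum : Summable (fun m : ℤ => (2:ℝ)^u * (1 / |(m:ℝ) + 1/2| ^ (2*u))) :=
    ((Real.summable_one_div_int_add_rpow (1/2) (2*u)).2 hu).mul_left _
  refine hsum.of_nonneg_of_le (fun m => Real.rpow_nonneg (by positivity) _) (fun m => ?_)
  have h1 : (0:ℝ) < 1 + (m:ℝ)^2 := by positivity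
  have hne : ((m:ℝ) + 1/2) ≠ 0 := by
    intro h
    have h2 : ((2*m+1 : ℤ) : ℝ) = 0 := by push_cast; linarith
    have h3 : (2*m+1 : ℤ) = 0 := by exact_mod_cast h2
    omega
  have habs : (0:ℝ) < |(m:ℝ) + 1/2| := abs_pos.2 hne
  have hP : (0:ℝ) < |(m:ℝ) + 1/2| ^ (2*u) := Real.rpow_pos_of_pos habs _
  have hA : (0:ℝ) < ((1:ℝ)+(m:ℝ)^2) ^ u := Real.rpow_pos_of_pos h1 _
  have key : |(m:ℝ) + 1/2| ^ (2*u) ≤ (2:ℝ)^u * ((1:ℝ) + (m:ℝ)^2)^u := by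
    have h2 : |(m:ℝ) + 1/2| ^ (2:ℕ) ≤ 2 * (1 + (m:ℝ)^2) := by
      rw [sq_abs]; nlinarith [sq_nonneg ((m:ℝ) - 1/2), sq_nonneg ((m:ℝ)+1/2)]
    calc |(m:ℝ)+1/2| ^ (2*u) = (|(m:ℝ)+1/2| ^ (2:ℕ)) ^ u := by
          rw [← Real.rpow_natCast |(m:ℝ)+1/2| 2, ← Real.rpow_mul (abs_nonneg _)]
          norm_num
      _ ≤ (2 * (1 + (m:ℝ)^2)) ^ u :=
          Real.rpow_le_rpow (by positivity) h2 hu0.le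
      _ = 2^u * (1+(m:ℝ)^2)^u := Real.mul_rpow (by norm_num) h1.le
  rw [Real.rpow_neg h1.le, mul_one_div, le_div_iff₀ hP, inv_mul_le_iff₀ hA]
  linarith [key]

lemma sumprod (h : ℤ → ℝ) (hpos : ∀ m, 0 ≤ h m) (hs : Summable h) (d : ℕ) :
    Summable (fun g : Fin d → ℤ => ∏ i, h (g i)) := by
  induction d with
  | zero => exact Summable.of_finite
  | succ n ih =>
    have hprod : Summable (fun p : ℤ × (Fin n → ℤ) => h p.1 * ∏ i, h (p.2 i)) :=
      Summable.mul_of_nonneg (ι := ℤ) (ι' := Fin n → ℤ)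
        (f := h) (g := fun g : Fin n → ℤ => ∏ i, h (g i)) hs ih
        (fun m => hpos m) (fun g => Finset.prod_nonneg fun i _ => hpos _)
    have key : ∀ p : ℤ × (Fin n → ℤ), h p.1 * ∏ i, h (p.2 i)
        = ∏ i, h ((Fin.cons p.1 p.2 : Fin (n+1) → ℤ) i) := by
      intro p
      rw [Fin.prod_univ_succ]
      simp
    have hprod2 : Summable (fun p : ℤ × (Fin n → ℤ) =>
        ∏ i, h ((Fin.cons p.1 p.2 : Fin (n+1) → ℤ) i)) := by
      refine hprod.congr (fun p => key p)
    exact (Equiv.summable_iff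
      (⟨fun p => Fin.cons p.1 p.2, fun g => (g 0, fun i => g i.succ),
        fun p => by simp, fun g => by
          funext i
          exact Fin.cases rfl (fun j => by simp) i⟩ :
        (ℤ × (Fin n → ℤ)) ≃ (Fin (n+1) → ℤ))).1 hprod2

lemma jbsum {d : ℕ} (hd : 1 ≤ d) {t : ℝ} (ht : (d:ℝ) < t) :
    Summable (fun g : Fin d → ℤ => jbracket g ^ (-t)) := by
  have hd0 : (0:ℝ) < d := by exact_mod_cast hd
  set u : ℝ := t / (2 * d) with hu_def
  have ht0 : 0 < t := lt_trans hd0 ht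
  have hu0 : 0 < u := by positivity
  have hu : 1 < 2 * u := by
    rw [hu_def, mul_div_assoc']
    rw [lt_div_iff₀ (by positivity)]
    nlinarith
  have base := sumprod (fun m => ((1:ℝ) + (m:ℝ)^2)^(-u))
    (fun m => Real.rpow_nonneg (by positivity) _) (sum1d hu) d
  refine base.of_nonneg_of_le (fun g => Real.rpow_nonneg (Real.sqrt_nonneg _) _) (fun g => ?_)
  have hS1 : (1:ℝ) ≤ 1 + ∑ i, ((g i : ℝ))^2 := le_add_of_nonneg_right (by positivity)
  have hS0 : (0:ℝ) < 1 + ∑ i, ((g i : ℝ))^2 := by linarith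
  have hjb : jbracket g ^ (-t) = (1 + ∑ i, ((g i : ℝ))^2) ^ (-(t/2)) := by
    rw [jbracket, Real.sqrt_eq_rpow, ← Real.rpow_mul hS0.le]
    congr 1
    ring
  have hProdpos : (0:ℝ) < ∏ i, ((1:ℝ)+((g i:ℝ))^2) :=
    Finset.prod_pos (fun i _ => by positivity)
  have hprodle : ∏ i, ((1:ℝ) + ((g i:ℝ))^2) ≤ (1 + ∑ i, ((g i : ℝ))^2) ^ d := by
    have h1 : ∏ i, ((1:ℝ) + ((g i:ℝ))^2) ≤ ∏ _i : Fin d, (1 + ∑ j, ((g j : ℝ))^2) := by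
      refine Finset.prod_le_prod (fun i _ => by positivity) (fun i _ => ?_)
      have : ((g i:ℝ))^2 ≤ ∑ j, ((g j:ℝ))^2 :=
        Finset.single_le_sum (f := fun j => ((g j:ℝ))^2) (fun j _ => by positivity)
          (Finset.mem_univ i)
      linarith
    simpa using h1
  have h2 : (∏ i, ((1:ℝ)+((g i:ℝ))^2)) ^ u ≤ (1 + ∑ i, ((g i : ℝ))^2) ^ (t/2) := by
    calc (∏ i, ((1:ℝ)+((g i:ℝ))^2)) ^ u ≤ (((1 + ∑ i, ((g i : ℝ))^2) ^ d : ℝ)) ^ u :=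
          Real.rpow_le_rpow hProdpos.le hprodle hu0.le
      _ = (1 + ∑ i, ((g i : ℝ))^2) ^ ((d:ℝ) * u) := by
          rw [← Real.rpow_natCast (1 + ∑ i, ((g i : ℝ))^2) d, ← Real.rpow_mul hS0.le]
      _ = (1 + ∑ i, ((g i : ℝ))^2) ^ (t/2) := by
          congr 1
          rw [hu_def]; field_simp
  rw [hjb]
  have hrw : ∀ i ∈ Finset.univ, (0:ℝ) ≤ (1:ℝ)+((g i:ℝ))^2 := fun i _ => by positivity
  calc (1 + ∑ i, ((g i : ℝ))^2) ^ (-(t/2))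
      = ((1 + ∑ i, ((g i : ℝ))^2) ^ (t/2))⁻¹ := by rw [Real.rpow_neg hS0.le]
    _ ≤ ((∏ i, ((1:ℝ)+((g i:ℝ))^2)) ^ u)⁻¹ :=
        inv_anti₀ (Real.rpow_pos_of_pos hProdpos u) h2
    _ = (∏ i, ((1:ℝ)+((g i:ℝ))^2)) ^ (-u) := by rw [Real.rpow_neg hProdpos.le]
    _ = ∏ i, ((1:ℝ)+((g i:ℝ))^2) ^ (-u) :=
        (Real.finset_prod_rpow Finset.univ _ hrw (-u)).symm


lemma interp {B s ε r a : ℝ} {n : ℕ} (hB : 0 ≤ B) (ha : 0 ≤ a)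
    (hs0 : 0 < s) (hsn : s ≤ n) (hε : 0 < ε) (hε1 : ε < 1) (hr : 0 ≤ r)
    (h1 : a ≤ B) (h2 : (ε * ((2*π)⁻¹ * r))^n * a ≤ B) :
    a * (1 + r^2) ^ (s/2) ≤
      B * ((1 + 4*π^2) ^ ((n:ℝ)/2) + 2 ^ ((n:ℝ)/2) * (2*π)^n) * ε ^ (-s) := by
  have hπ : (0:ℝ) < π := pi_pos
  have h2π : (1:ℝ) ≤ 2*π := by nlinarith [pi_gt_three]
  have hεs : (0:ℝ) < ε ^ (-s) := Real.rpow_pos_of_pos hε _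
  have hc1 : (0:ℝ) ≤ (1 + 4*π^2) ^ ((n:ℝ)/2) := Real.rpow_nonneg (by positivity) _
  have hc2 : (0:ℝ) ≤ 2 ^ ((n:ℝ)/2) * (2*π)^n := by positivity
  have hsn2 : s/2 ≤ (n:ℝ)/2 := by linarith
  rcases le_or_gt (ε * ((2*π)⁻¹ * r)) 1 with hcase | hcase
  · -- small frequency case : ε * r ≤ 2π
    have hεr : ε * r ≤ 2*π := by
      have h := mul_le_mul_of_nonneg_left hcase (le_of_lt (by positivity : (0:ℝ) < 2*π))
      rw [mul_one] at h
      calc ε * r = (2*π) * (ε * ((2*π)⁻¹ * r)) := by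
            field_simp
        _ ≤ 2*π := h
    have hI1 : (1:ℝ) ≤ (ε^2)⁻¹ := (one_le_inv₀ (by positivity)).mpr (by nlinarith)
    have key1 : 1 + r^2 ≤ (1+4*π^2) * (ε^2)⁻¹ := by
      have hA : r^2*ε^2 ≤ 4*π^2 := by
        have hh := mul_le_mul hεr hεr (by positivity : (0:ℝ) ≤ ε*r) (by positivity : (0:ℝ) ≤ 2*π)
        nlinarith [hh]
      have hAB := mul_le_mul_of_nonneg_right hA (by positivity : (0:ℝ) ≤ (ε^2)⁻¹)
      have hBB : r^2*ε^2*(ε^2)⁻¹ = r^2 := by field_simp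
      rw [hBB] at hAB
      nlinarith
    have hεalg : ((ε^2)⁻¹ : ℝ) ^ (s/2) = ε ^ (-s) := by
      have e1 : ((ε^2)⁻¹ : ℝ) = ε ^ (-(2:ℝ)) := by
        rw [Real.rpow_neg hε.le]
        congr 1
        rw [← Real.rpow_natCast ε 2]
        norm_num
      rw [e1, ← Real.rpow_mul hε.le]
      congr 1
      ring
    calc a * (1+r^2)^(s/2)
        ≤ B * ((1+4*π^2) * (ε^2)⁻¹)^(s/2) := by
          apply mul_le_mul h1 (Real.rpow_le_rpow (by positivity) key1 (by positivity))
            (Real.rpow_nonneg (by positivity) _) hB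
      _ = B * ((1+4*π^2)^(s/2) * ε^(-s)) := by
          rw [Real.mul_rpow (by positivity) (by positivity), hεalg]
      _ ≤ B * ((1+4*π^2)^((n:ℝ)/2) * ε^(-s)) := by
          apply mul_le_mul_of_nonneg_left _ hB
          apply mul_le_mul_of_nonneg_right _ hεs.le
          exact Real.rpow_le_rpow_of_exponent_le (by nlinarith) hsn2
      _ ≤ B * ((1 + 4*π^2) ^ ((n:ℝ)/2) + 2 ^ ((n:ℝ)/2) * (2*π)^n) * ε ^ (-s) := by
          rw [mul_assoc]
          apply mul_le_mul_of_nonneg_left _ hB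
          apply mul_le_mul_of_nonneg_right _ hεs.le
          linarith
  · -- large frequency case
    set ρ : ℝ := ε * ((2*π)⁻¹ * r) with hρ
    have hρ1 : (1:ℝ) ≤ ρ := hcase.le
    have hρ0 : (0:ℝ) < ρ := lt_of_lt_of_le one_pos hρ1
    have hr2π : 2*π ≤ ε * r := by
      have h := mul_le_mul_of_nonneg_left hρ1 (le_of_lt (by positivity : (0:ℝ) < 2*π))
      rw [mul_one] at h
      calc 2*π ≤ 2*π*ρ := h
        _ = ε * r := by rw [hρ]; field_simp
    have hr1 : (1:ℝ) ≤ r := by nlinarith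
    have key2 : 1 + r^2 ≤ 2 * r^2 := by nlinarith
    have hrs : (1+r^2)^(s/2) ≤ 2^(s/2) * r^s := by
      calc (1+r^2)^(s/2) ≤ (2*r^2)^(s/2) :=
            Real.rpow_le_rpow (by positivity) key2 (by positivity)
        _ = 2^(s/2) * (r^2)^(s/2) := Real.mul_rpow (by norm_num) (by positivity)
        _ = 2^(s/2) * r^s := by
            congr 1
            rw [← Real.rpow_natCast r 2, ← Real.rpow_mul hr]
            congr 1
            push_cast
            ring
    have hrρ : r = (2*π/ε) * ρ := by
      rw [hρ]
      field_simp
    have hars : a * r^s ≤ (2*π)^n * ε^(-s) * B := by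
      have hρs : ρ^s ≤ ρ^n := by
        rw [← Real.rpow_natCast ρ n]
        exact Real.rpow_le_rpow_of_exponent_le hρ1 hsn
      have hstep1 : a * r^s = (2*π/ε)^s * (ρ^s * a) := by
        rw [hrρ, Real.mul_rpow (by positivity) hρ0.le]
        ring
      have hstep2 : (2*π/ε)^s * (ρ^s * a) ≤ (2*π/ε)^s * B := by
        apply mul_le_mul_of_nonneg_left _ (Real.rpow_nonneg (by positivity) _)
        calc ρ^s * a ≤ ρ^n * a := mul_le_mul_of_nonneg_right hρs ha
          _ ≤ B := h2
      have hstep3 : (2*π/ε)^s = (2*π)^s * ε^(-s) := by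
        rw [Real.div_rpow (by positivity) hε.le, Real.rpow_neg hε.le, div_eq_mul_inv]
      have hstep4 : (2*π)^s ≤ ((2*π)^n : ℝ) := by
        rw [← Real.rpow_natCast (2*π) n]
        exact Real.rpow_le_rpow_of_exponent_le h2π hsn
      calc a * r^s = (2*π/ε)^s * (ρ^s * a) := hstep1
        _ ≤ (2*π/ε)^s * B := hstep2
        _ = (2*π)^s * ε^(-s) * B := by rw [hstep3]
        _ ≤ (2*π)^n * ε^(-s) * B := by
            apply mul_le_mul_of_nonneg_right _ hB
            exact mul_le_mul_of_nonneg_right hstep4 hεs.le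
    have h2s : (2:ℝ)^(s/2) ≤ 2^((n:ℝ)/2) :=
      Real.rpow_le_rpow_of_exponent_le (by norm_num) hsn2
    calc a * (1+r^2)^(s/2) ≤ a * (2^(s/2) * r^s) :=
          mul_le_mul_of_nonneg_left hrs ha
      _ = 2^(s/2) * (a * r^s) := by ring
      _ ≤ 2^(s/2) * ((2*π)^n * ε^(-s) * B) := by
          apply mul_le_mul_of_nonneg_left hars (Real.rpow_nonneg (by norm_num) _)
      _ ≤ 2^((n:ℝ)/2) * ((2*π)^n * ε^(-s) * B) := by
          apply mul_le_mul_of_nonneg_right h2s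
          positivity
      _ ≤ B * ((1 + 4*π^2) ^ ((n:ℝ)/2) + 2 ^ ((n:ℝ)/2) * (2*π)^n) * ε ^ (-s) := by
          have expand : 2^((n:ℝ)/2) * ((2*π)^n * ε^(-s) * B)
              = B * (2^((n:ℝ)/2) * (2*π)^n) * ε^(-s) := by ring
          rw [expand]
          apply mul_le_mul_of_nonneg_right _ hεs.le
          apply mul_le_mul_of_nonneg_left _ hB
          linarith


variable {d : ℕ}

lemma fourier_scale (Φ : EuclideanSpace ℝ (Fin d) → ℂ) (c : EuclideanSpace ℝ (Fin d))
    {ε : ℝ} (hε : 0 < ε) (ξ : EuclideanSpace ℝ (Fin d)) :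
    ‖𝓕 (fun x => Φ (ε⁻¹ • (x - c) + c)) ξ‖ = ε ^ d * ‖𝓕 Φ (ε • ξ)‖ := by
  have hεne : ε ≠ 0 := ne_of_gt hε
  rw [Real.fourier_eq', Real.fourier_eq']
  set H : EuclideanSpace ℝ (Fin d) → ℂ :=
    fun x => Complex.exp ((↑(-2 * π * ⟪x, ξ⟫) : ℂ) * Complex.I) • Φ (ε⁻¹ • (x - c) + c) with hH
  set b : EuclideanSpace ℝ (Fin d) := c - ε • c with hb
  have hA : ∫ x, H (ε • x + b) = |(ε ^ d : ℝ)⁻¹| • ∫ x, H x := by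
    calc ∫ x, H (ε • x + b) = ∫ x, (fun y => H (y + b)) (ε • x) := by simp
      _ = |(ε ^ Module.finrank ℝ (EuclideanSpace ℝ (Fin d)))⁻¹| • ∫ y, H (y + b) :=
          MeasureTheory.Measure.integral_comp_smul volume (fun y => H (y + b)) ε
      _ = |(ε ^ d : ℝ)⁻¹| • ∫ y, H y := by
          rw [finrank_euclideanSpace_fin, MeasureTheory.integral_add_right_eq_self]
  have hmain : ∫ x, H x = (ε ^ d : ℝ) • ∫ x, H (ε • x + b) := by
    rw [hA, smul_smul, abs_of_pos (by positivity : (0:ℝ) < (ε^d)⁻¹)]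
    rw [mul_inv_cancel₀ (by positivity : (ε:ℝ)^d ≠ 0), one_smul]
  have hHeval : ∀ x, H (ε • x + b) =
      Complex.exp ((↑(-2*π*⟪b, ξ⟫) : ℂ) * Complex.I) •
        (Complex.exp ((↑(-2*π*⟪x, ε•ξ⟫) : ℂ) * Complex.I) • Φ x) := by
    intro x
    have harg : ε⁻¹ • (ε • x + b - c) + c = x := by
      rw [hb]
      rw [show ε • x + (c - ε • c) - c = ε • (x - c) by module]
      rw [smul_smul, inv_mul_cancel₀ hεne, one_smul]
      module
    have hinner : ⟪ε•x + b, ξ⟫ = ⟪x, ε•ξ⟫ + ⟪b, ξ⟫ := by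
      rw [inner_add_left, real_inner_smul_left, real_inner_smul_right]
    rw [hH]
    simp only
    rw [harg, hinner, smul_smul, ← Complex.exp_add]
    congr 2
    push_cast
    ring
  have hint : ∫ x, H (ε • x + b) =
      Complex.exp ((↑(-2*π*⟪b, ξ⟫) : ℂ) * Complex.I) •
        ∫ x, Complex.exp ((↑(-2*π*⟪x, ε•ξ⟫) : ℂ) * Complex.I) • Φ x := by
    rw [← integral_smul]
    exact integral_congr_ae (Filter.Eventually.of_forall hHeval)
  rw [hmain, hint, norm_smul, norm_smul]
  rw [Complex.norm_exp_ofReal_mul_I]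
  rw [one_mul, Real.norm_eq_abs, abs_pow, abs_of_pos hε]


lemma coef_eq (ψ : (Fin d → ℝ) → ℂ) (hψ0 : ∀ k, k ∉ torusBox d → ψ k = 0) (g : Fin d → ℤ) :
    ‖fourierCoef ψ g‖ =
      ((2*π : ℝ))^(-(d:ℤ)) *
        ‖𝓕 (fun x : EuclideanSpace ℝ (Fin d) => ψ ((WithLp.equiv 2 (Fin d → ℝ)) x))
          ((2*π)⁻¹ • (WithLp.equiv 2 (Fin d → ℝ)).symm (fun i => (g i : ℝ)))‖ := by
  have hπ : (0:ℝ) < π := pi_pos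
  have key : ∫ k in torusBox d, ψ k * Complex.exp (-Complex.I * (∑ i, (k i * (g i : ℝ) : ℝ)))
      = 𝓕 (fun x : EuclideanSpace ℝ (Fin d) => ψ ((WithLp.equiv 2 (Fin d → ℝ)) x))
          ((2*π)⁻¹ • (WithLp.equiv 2 (Fin d → ℝ)).symm (fun i => (g i : ℝ))) := by
    rw [setIntegral_eq_integral_of_forall_compl_eq_zero
      (fun k hk => by rw [hψ0 k hk, zero_mul])]
    rw [Real.fourier_eq']
    rw [← MeasurePreserving.integral_comp (EuclideanSpace.volume_preserving_symm_measurableEquiv_toLp (Fin d))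
      (MeasurableEquiv.toLp 2 (Fin d → ℝ)).symm.measurableEmbedding
      (fun k => ψ k * Complex.exp (-Complex.I * (∑ i, (k i * (g i : ℝ) : ℝ))))]
    refine integral_congr_ae (Filter.Eventually.of_forall fun x => ?_)
    simp only [MeasurableEquiv.coe_toLp_symm]
    have hin : ⟪x, (2*π)⁻¹ • (WithLp.equiv 2 (Fin d → ℝ)).symm (fun i => (g i : ℝ))⟫
        = (2*π)⁻¹ * ∑ i, x i * (g i : ℝ) := by
      rw [real_inner_smul_right, PiLp.inner_apply]
      simp [RCLike.inner_apply]
      exact Finset.sum_congr rfl fun i _ => mul_comm _ _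
    rw [hin, smul_eq_mul]
    rw [mul_comm (Complex.exp _) (ψ _)]
    congr 1
    have harg : (-2 * π * ((2*π)⁻¹ * ∑ i, x i * (g i : ℝ)) : ℝ)
        = -(∑ i, x i * (g i : ℝ)) := by field_simp
    rw [harg]
    push_cast
    ring_nf
  rw [fourierCoef, key, norm_mul]
  congr 1
  rw [norm_zpow]
  congr 1
  rw [show ((2*π : ℂ)) = (((2*π : ℝ)) : ℂ) by push_cast; rfl, Complex.norm_real, Real.norm_eq_abs]
  exact abs_of_pos (by positivity)


lemma decay_bound (Φ : EuclideanSpace ℝ (Fin d) → ℂ) (hΦ : ContDiff ℝ (⊤ : ℕ∞) Φ)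
    (hc : HasCompactSupport Φ) (n : ℕ) :
    ∃ B : ℝ, 0 < B ∧ ∀ w : EuclideanSpace ℝ (Fin d),
      ‖𝓕 Φ w‖ ≤ B ∧ ‖w‖ ^ n * ‖𝓕 Φ w‖ ≤ B := by
  have hint : ∀ k m : ℕ, Integrable (fun v : EuclideanSpace ℝ (Fin d) =>
      ‖v‖^k * ‖iteratedFDeriv ℝ m Φ v‖) := by
    intro k m
    have hcont : Continuous (fun v : EuclideanSpace ℝ (Fin d) =>
        ‖v‖^k * ‖iteratedFDeriv ℝ m Φ v‖) :=
      ((continuous_norm.pow k).mul (hΦ.continuous_iteratedFDeriv (by exact_mod_cast le_top)).norm)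
    apply hcont.integrable_of_hasCompactSupport
    exact ((hc.iteratedFDeriv m).norm).mul_left
  set B1 : ℝ := (2 * π) ^ (0:ℕ) * (2 * (0:ℕ) + 2) ^ n *
    ∑ p ∈ Finset.range (0 + 1) ×ˢ Finset.range (n + 1),
      ∫ v : EuclideanSpace ℝ (Fin d), ‖v‖ ^ p.1 * ‖iteratedFDeriv ℝ p.2 Φ v‖ with hB1
  set B0 : ℝ := ∫ v : EuclideanSpace ℝ (Fin d), ‖Φ v‖ with hB0
  have hB0nn : 0 ≤ B0 := integral_nonneg (fun v => norm_nonneg _)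
  have hB1nn : 0 ≤ B1 := by
    rw [hB1]
    apply mul_nonneg (by positivity)
    apply Finset.sum_nonneg
    intro p _
    exact integral_nonneg (fun v => by positivity)
  refine ⟨B0 + B1 + 1, by positivity, fun w => ⟨?_, ?_⟩⟩
  · have h := VectorFourier.norm_fourierIntegral_le_integral_norm
      (Real.fourierChar) (volume) (innerₗ (EuclideanSpace ℝ (Fin d))) Φ w
    calc ‖𝓕 Φ w‖ ≤ B0 := h
      _ ≤ B0 + B1 + 1 := by linarith
  · have h := Real.pow_mul_norm_iteratedFDeriv_fourier_le
      (f := Φ) (K := (⊤:ℕ∞)) (N := (⊤:ℕ∞)) (hΦ.of_le (by simp))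
      (fun k m _ _ => hint k m) (k := 0) (n := n) le_top le_top w
    rw [norm_iteratedFDeriv_zero] at h
    calc ‖w‖ ^ n * ‖𝓕 Φ w‖ ≤ B1 := h
      _ ≤ B0 + B1 + 1 := by linarith


end SCFD

/-- **Fourier decay of scaled cutoffs.** Fix `d ≥ 1`, `N` real and
`s ∈ (max(0, N+d), d)`. Let `φ ∈ C^∞(𝕋^d)` be supported in a ball `B(k₀, 2δ)`
contained in the fundamental domain, and set `φ^ε(k) := φ(ε⁻¹(k−k₀)+k₀)` for
`0 < ε < 1`. Then `|φ̂^ε(g)| ≤ C ε^{d−s} ⟨g⟩^{−s}` with `C` independent of `ε, g`;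
consequently `∑_g |φ̂^ε(g)| ⟨g⟩^N ≤ C' ε^{d−s}`, which tends to `0` as `ε → 0⁺`. -/
theorem scaled_cutoff_fourier_decay (d : ℕ) (hd : 1 ≤ d) (N s : ℝ)
    (hs₁ : max 0 (N + d) < s) (hs₂ : s < d)
    (k₀ : Fin d → ℝ) (δ : ℝ) (hδ : 0 < δ)
    (hball : Metric.ball k₀ (2 * δ) ⊆ torusBox d)
    (φ : (Fin d → ℝ) → ℂ) (hφ : ContDiff ℝ (⊤ : ℕ∞) φ)
    (hsupp : ∀ k, k ∉ Metric.ball k₀ (2 * δ) → φ k = 0) :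
    (∃ C : ℝ, 0 < C ∧ ∀ ε : ℝ, ε ∈ Set.Ioo (0 : ℝ) 1 → ∀ g : Fin d → ℤ,
      ‖fourierCoef (fun k => φ (fun i => ε⁻¹ * (k i - k₀ i) + k₀ i)) g‖ ≤
        C * ε ^ ((d : ℝ) - s) * jbracket g ^ (-s)) ∧
    (∃ C' : ℝ, 0 < C' ∧ ∀ ε : ℝ, ε ∈ Set.Ioo (0 : ℝ) 1 →
      ∑' g : Fin d → ℤ,
        ‖fourierCoef (fun k => φ (fun i => ε⁻¹ * (k i - k₀ i) + k₀ i)) g‖ *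
          jbracket g ^ N ≤ C' * ε ^ ((d : ℝ) - s)) := by
  classical
  have hπ : (0:ℝ) < π := Real.pi_pos
  set n : ℕ := ⌈s⌉₊ with hn
  have hs0 : 0 < s := lt_of_le_of_lt (le_max_left _ _) hs₁
  have hsn : s ≤ (n:ℝ) := Nat.le_ceil s
  set Φ : EuclideanSpace ℝ (Fin d) → ℂ :=
    fun x => φ ((WithLp.equiv 2 (Fin d → ℝ)) x) with hΦdef
  set c : EuclideanSpace ℝ (Fin d) := (WithLp.equiv 2 (Fin d → ℝ)).symm k₀ with hcdef
  have hΦ : ContDiff ℝ (⊤ : ℕ∞) Φ := by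
    have hL : ContDiff ℝ (⊤ : ℕ∞) (fun x : EuclideanSpace ℝ (Fin d) =>
        (WithLp.equiv 2 (Fin d → ℝ)) x) :=
      (PiLp.continuousLinearEquiv 2 ℝ (fun _ : Fin d => ℝ)).toContinuousLinearMap.contDiff
    exact hφ.comp hL
  have hcΦ : HasCompactSupport Φ := by
    apply HasCompactSupport.intro
      (K := (WithLp.equiv 2 (Fin d → ℝ)).symm '' Metric.closedBall k₀ (2*δ))
    · exact (isCompact_closedBall k₀ (2*δ)).image
        (PiLp.continuousLinearEquiv 2 ℝ (fun _ : Fin d => ℝ)).symm.continuous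
    · intro x hx
      apply hsupp
      intro hmem
      exact hx ⟨(WithLp.equiv 2 (Fin d → ℝ)) x, Metric.ball_subset_closedBall hmem,
        (WithLp.equiv 2 (Fin d → ℝ)).symm_apply_apply x⟩
  obtain ⟨B, hBpos, hB⟩ := SCFD.decay_bound Φ hΦ hcΦ n
  set C₃ : ℝ := (1 + 4*π^2) ^ ((n:ℝ)/2) + 2 ^ ((n:ℝ)/2) * (2*π)^n with hC₃
  have hC₃pos : 0 < C₃ := by positivity
  set C : ℝ := (2*π : ℝ)^(-(d:ℤ)) * (B * C₃) with hC
  have hCpos : 0 < C := by positivity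
  have hjbnn : ∀ g : Fin d → ℤ, 0 ≤ jbracket g := fun g => Real.sqrt_nonneg _
  have hjbpos : ∀ g : Fin d → ℤ, 0 < jbracket g := fun g => Real.sqrt_pos.2 (by positivity)
  have part1 : ∀ ε : ℝ, ε ∈ Set.Ioo (0:ℝ) 1 → ∀ g : Fin d → ℤ,
      ‖fourierCoef (fun k => φ (fun i => ε⁻¹ * (k i - k₀ i) + k₀ i)) g‖ ≤
        C * ε ^ ((d : ℝ) - s) * jbracket g ^ (-s) := by
    rintro ε ⟨hε0, hε1⟩ g
    set ψ : (Fin d → ℝ) → ℂ :=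
      fun k => φ (fun i => ε⁻¹ * (k i - k₀ i) + k₀ i) with hψ
    have hψ0 : ∀ k, k ∉ torusBox d → ψ k = 0 := by
      intro k hk
      rw [hψ]
      simp only
      apply hsupp
      intro hmem
      apply hk
      apply hball
      rw [Metric.mem_ball, dist_pi_lt_iff (by positivity)]
      intro i
      have h1 : dist ((fun j => ε⁻¹ * (k j - k₀ j) + k₀ j) i) (k₀ i) ≤
          dist (fun j => ε⁻¹ * (k j - k₀ j) + k₀ j) k₀ :=
        dist_le_pi_dist (fun j => ε⁻¹ * (k j - k₀ j) + k₀ j) k₀ i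
      have h2 : dist (fun j => ε⁻¹ * (k j - k₀ j) + k₀ j) k₀ < 2*δ := Metric.mem_ball.1 hmem
      have h3 : dist ((fun j => ε⁻¹ * (k j - k₀ j) + k₀ j) i) (k₀ i) = ε⁻¹ * |k i - k₀ i| := by
        simp only
        rw [Real.dist_eq, add_sub_cancel_right, abs_mul,
          abs_of_pos (by positivity : (0:ℝ) < ε⁻¹)]
      have h4 : ε⁻¹ * |k i - k₀ i| < 2*δ := lt_of_le_of_lt (h3 ▸ h1) h2
      have h5 := (mul_lt_mul_iff_right₀ hε0).2 h4
      rw [← mul_assoc, mul_inv_cancel₀ hε0.ne', one_mul] at h5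
      rw [Real.dist_eq]
      nlinarith
    have key := SCFD.coef_eq ψ hψ0 g
    have hΨ : (fun x : EuclideanSpace ℝ (Fin d) => ψ ((WithLp.equiv 2 (Fin d → ℝ)) x))
        = fun x : EuclideanSpace ℝ (Fin d) => Φ (ε⁻¹ • (x - c) + c) := rfl
    rw [hΨ, SCFD.fourier_scale Φ c hε0] at key
    set v : EuclideanSpace ℝ (Fin d) :=
      (WithLp.equiv 2 (Fin d → ℝ)).symm (fun i => (g i : ℝ)) with hv
    set a : ℝ := ‖𝓕 Φ (ε • ((2*π)⁻¹ • v))‖ with ha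
    set r : ℝ := ‖v‖ with hr
    have hnorm : ‖ε • ((2*π)⁻¹ • v)‖ = ε * ((2*π)⁻¹ * r) := by
      rw [norm_smul, norm_smul, Real.norm_eq_abs, Real.norm_eq_abs, abs_of_pos hε0,
        abs_of_pos (by positivity : (0:ℝ) < (2*π)⁻¹)]
    obtain ⟨h1, h2⟩ := hB (ε • ((2*π)⁻¹ • v))
    rw [hnorm] at h2
    have hint := SCFD.interp hBpos.le (norm_nonneg _) hs0 hsn hε0 hε1 (norm_nonneg v) h1 h2
    have hS0 : (0:ℝ) < 1 + r^2 := by positivity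
    have hr2 : r^2 = ∑ i, ((g i:ℝ))^2 := by
      rw [hr, EuclideanSpace.norm_eq, Real.sq_sqrt (by positivity)]
      congr 1
      funext i
      rw [Real.norm_eq_abs, sq_abs]
      rfl
    have hjb : jbracket g ^ (-s) = (1 + r^2) ^ (-(s/2)) := by
      rw [jbracket, ← hr2, Real.sqrt_eq_rpow, ← Real.rpow_mul hS0.le]
      congr 1
      ring
    have ha_le : a ≤ B * C₃ * ε^(-s) * (1+r^2)^(-(s/2)) := by
      have hmul := mul_le_mul_of_nonneg_right hint (Real.rpow_nonneg hS0.le (-(s/2)))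
      rwa [mul_assoc, ← Real.rpow_add hS0, show s/2 + -(s/2) = 0 by ring,
        Real.rpow_zero, mul_one] at hmul
    rw [key, hjb]
    have hεds : (ε:ℝ)^(d:ℕ) * ε^(-s) = ε ^ ((d:ℝ) - s) := by
      rw [← Real.rpow_natCast ε d, ← Real.rpow_add hε0, sub_eq_add_neg]
    calc (2*π : ℝ)^(-(d:ℤ)) * (ε^d * a)
        ≤ (2*π : ℝ)^(-(d:ℤ)) * (ε^d * (B * C₃ * ε^(-s) * (1+r^2)^(-(s/2)))) := by
          apply mul_le_mul_of_nonneg_left _ (by positivity)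
          exact mul_le_mul_of_nonneg_left ha_le (by positivity)
      _ = C * ε ^ ((d:ℝ) - s) * (1+r^2)^(-(s/2)) := by
          rw [hC, ← hεds]
          ring
  refine ⟨⟨C, hCpos, part1⟩, ?_⟩
  have ht : (d:ℝ) < s - N := by
    have := lt_of_le_of_lt (le_max_right (0:ℝ) (N + d)) hs₁
    linarith
  have hsum : Summable (fun g : Fin d → ℤ => jbracket g ^ (N - s)) := by
    have h := SCFD.jbsum hd ht
    simp only [neg_sub] at h
    exact h
  set S := ∑' g : Fin d → ℤ, jbracket g ^ (N - s) with hS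
  have hSpos : 0 < S := by
    apply Summable.tsum_pos hsum (fun g => Real.rpow_nonneg (hjbnn g) _) (fun _ => 0)
    have h1 : jbracket (fun _ : Fin d => (0:ℤ)) = 1 := by
      simp [jbracket]
    rw [h1, Real.one_rpow]
    norm_num
  refine ⟨C * S, mul_pos hCpos hSpos, ?_⟩
  rintro ε ⟨hε0, hε1⟩
  have hpb : ∀ g : Fin d → ℤ,
      ‖fourierCoef (fun k => φ (fun i => ε⁻¹ * (k i - k₀ i) + k₀ i)) g‖ *
        jbracket g ^ N ≤ (C * ε^((d:ℝ)-s)) * jbracket g ^ (N - s) := by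
    intro g
    have h := part1 ε ⟨hε0, hε1⟩ g
    have hmul := mul_le_mul_of_nonneg_right h (Real.rpow_nonneg (hjbnn g) N)
    calc ‖fourierCoef (fun k => φ (fun i => ε⁻¹ * (k i - k₀ i) + k₀ i)) g‖ *
          jbracket g ^ N
        ≤ C * ε^((d:ℝ)-s) * jbracket g ^ (-s) * jbracket g ^ N := hmul
      _ = (C * ε^((d:ℝ)-s)) * jbracket g ^ (N - s) := by
          rw [mul_assoc, ← Real.rpow_add (hjbpos g), show -s + N = N - s by ring]
  have hsummul : Summable (fun g : Fin d → ℤ => (C * ε^((d:ℝ)-s)) * jbracket g ^ (N-s)) :=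
    hsum.mul_left _
  have hlhs : Summable (fun g : Fin d → ℤ =>
      ‖fourierCoef (fun k => φ (fun i => ε⁻¹ * (k i - k₀ i) + k₀ i)) g‖ *
        jbracket g ^ N) :=
    Summable.of_nonneg_of_le
      (fun g => mul_nonneg (norm_nonneg _) (Real.rpow_nonneg (hjbnn g) _)) hpb hsummul
  calc ∑' g : Fin d → ℤ,
        ‖fourierCoef (fun k => φ (fun i => ε⁻¹ * (k i - k₀ i) + k₀ i)) g‖ *
          jbracket g ^ N
      ≤ ∑' g : Fin d → ℤ, (C * ε^((d:ℝ)-s)) * jbracket g ^ (N - s) :=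
        Summable.tsum_le_tsum hpb hlhs hsummul
    _ = (C * ε^((d:ℝ)-s)) * S := tsum_mul_left
    _ = (C * S) * ε^((d:ℝ)-s) := by ring
end
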